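/- Let H be a real Hilbert space, let γ > 0, and let f : H → ℝ be γ-strongly convex, twice continuously differentiable, with ∇f Lipschitz continuous on every bounded subset of H; let x̄ be its unique minimizer. Let φ : H → [0,∞) be a damping potential which is differentiable with ∇φ Lipschitz continuous on every bounded subset of H, and assume: (i) there exist α > 0 and ε > 0 such that ⟨∇φ(u), u⟩ ≥ α‖u‖² whenever ‖u‖ ≤ ε; (ii) there exist p ≥ 1 and r > 0 such that φ(u) ≥ r‖u‖^p for all u ∈ H. Let β > 0 and let x : [0,∞) → H be a twice continuously differentiable solution of ẍ(t) + ∇φ(ẋ(t) + β∇f(x(t))) + β∇²f(x(t))ẋ(t) + ∇f(x(t)) = 0. Then there exist constants K ≥ 0 and λ > 0 such that for all t ≥ 0: f(x(t)) − f(x̄) ≤ K e^{−λt}, ‖x(t) − x̄‖ ≤ K e^{−λt}, ‖ẋ(t) + β∇f(x(t))‖ ≤ K e^{−λt}, and, as a consequence, ‖ẋ(t)‖ ≤ K e^{−λt} and ‖∇f(x(t))‖ ≤ K e^{−λt}. -/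

import Mathlib

/-!
With `v = ẋ + β∇f(x)` the equation becomes the first-order system `ẋ = v - β∇f(x)`,
`v̇ = -(∇φ(v) + ∇f(x))`, along which the energy `E = f(x) - f(x̄) + ‖v‖²/2` has derivative
`-β‖∇f(x)‖² - ⟪∇φ(v), v⟫ ≤ 0`. Strong convexity gives the Polyak–Łojasiewicz inequality
`‖∇f‖² ≥ 2γ(f - f(x̄))`; together with the global growth of `φ` it keeps `Ė ≤ -δ < 0` as long as
`E > ε²/2`, so `E` falls below `ε²/2` in finite time. From then on `‖v‖ ≤ ε`, the local growth of
`∇φ` applies, and `Ė ≤ -min(2γβ, 2α) E`, so `E` decays exponentially by Grönwall. Quadratic growth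
bounds `‖x - x̄‖` and `‖v‖` by `√E`, the Lipschitz bound of `∇f` on a ball containing the
trajectory bounds `‖∇f(x)‖ ≤ K‖x - x̄‖`, and `ẋ = v - β∇f(x)`.
-/

open Set Filter Topology MeasureTheory Metric Bornology
open scoped RealInnerProductSpace NNReal

noncomputable section

variable {H : Type*} [NormedAddCommGroup H] [InnerProductSpace ℝ H] [CompleteSpace H]

/-- The convex subdifferential of `φ` at `u`. -/
def subdiff (φ : H → ℝ) (u : H) : Set H :=
  {ξ : H | ∀ v : H, φ u + ⟪ξ, v - u⟫ ≤ φ v}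

/-- A damping potential: a nonnegative convex continuous function vanishing (and
minimal) at the origin, whose minimal section of the subdifferential is bounded on
bounded sets (expressed through the existence of subgradients of uniformly bounded
norm). -/
structure IsDampingPotential (φ : H → ℝ) : Prop where
  nonneg : ∀ u, 0 ≤ φ u
  convexOn : ConvexOn ℝ Set.univ φ
  continuous : Continuous φ
  map_zero : φ 0 = 0
  minimalSectionBounded : ∀ R : ℝ, 0 < R →
    ∃ M : ℝ, ∀ u : H, ‖u‖ ≤ R → ∃ ξ ∈ subdiff φ u, ‖ξ‖ ≤ M

open InnerProductSpace Real

lemma ConvexOn.add_le_of_hasFDerivAt {E : Type*} [NormedAddCommGroup E] [NormedSpace ℝ E]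
    {g : E → ℝ} {g' : E →L[ℝ] ℝ} {x : E} (hg : ConvexOn ℝ univ g) (hx : HasFDerivAt g g' x)
    (y : E) : g x + g' (y - x) ≤ g y := by
  set ℓ : ℝ →ᵃ[ℝ] E := AffineMap.lineMap x y
  have hline : ConvexOn ℝ univ (g ∘ ℓ) := by simpa using hg.comp_affineMap ℓ
  have hderiv : HasDerivAt (g ∘ ℓ) (g' (y - x)) 0 := by
    apply hx.comp_hasDerivAt_of_eq 0 AffineMap.hasDerivAt_lineMap
    simp
  have := hline.le_slope_of_hasDerivAt (mem_univ 0) (mem_univ 1) one_pos hderiv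
  simp [ℓ, slope_def_field] at this
  linarith [map_sub g' y x]

lemma ConvexOn.add_inner_le_of_hasGradientAt {g : H → ℝ} {g' x : H}
    (hg : ConvexOn ℝ univ g) (hx : HasGradientAt g g' x) (y : H) :
    g x + ⟪g', y - x⟫ ≤ g y := by
  simpa using hg.add_le_of_hasFDerivAt hx.hasFDerivAt y

lemma ConvexOn.sub_le_inner_of_hasGradientAt {g : H → ℝ} {g' u : H} (hg : ConvexOn ℝ univ g)
    (hu : HasGradientAt g g' u) : g u - g 0 ≤ ⟪g', u⟫ := by
  have := hg.add_inner_le_of_hasGradientAt hu 0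
  rw [zero_sub, inner_neg_right] at this
  linarith

section StronglyConvex

variable {γ : ℝ} {f : H → ℝ}

lemma add_inner_add_sq_le_of_convexOn_sub_sq {f' x : H}
    (hsc : ConvexOn ℝ univ (fun y => f y - γ / 2 * ‖y‖ ^ 2)) (hx : HasGradientAt f f' x)
    (y : H) : f x + ⟪f', y - x⟫ + γ / 2 * ‖y - x‖ ^ 2 ≤ f y := by
  have hq : HasFDerivAt (fun y : H => γ / 2 * ‖y‖ ^ 2) ((γ / 2) • 2 • innerSL ℝ x) x :=
    (hasStrictFDerivAt_norm_sq x).hasFDerivAt.const_mul _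
  have := hsc.add_le_of_hasFDerivAt (hx.hasFDerivAt.sub hq) y
  have hy : ‖y‖ ^ 2 = ‖x‖ ^ 2 + 2 * ⟪x, y - x⟫ + ‖y - x‖ ^ 2 := by
    rw [← norm_add_sq_real, add_sub_cancel]
  simp only [sub_apply, smul_apply, innerSL_apply_apply,
    toDual_apply_apply, smul_eq_mul, nsmul_eq_mul] at this
  rw [hy] at this
  linarith

lemma quadratic_growth_of_convexOn_sub_sq {xbar : H}
    (hsc : ConvexOn ℝ univ (fun y => f y - γ / 2 * ‖y‖ ^ 2)) (hxbar : HasGradientAt f 0 xbar)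
    (y : H) : γ / 2 * ‖y - xbar‖ ^ 2 ≤ f y - f xbar := by
  have := add_inner_add_sq_le_of_convexOn_sub_sq hsc hxbar y
  rw [inner_zero_left] at this
  linarith

lemma polyak_lojasiewicz_of_convexOn_sub_sq (hγ : 0 < γ)
    (hsc : ConvexOn ℝ univ (fun y => f y - γ / 2 * ‖y‖ ^ 2)) {f' x : H}
    (hx : HasGradientAt f f' x) (y : H) : 2 * γ * (f x - f y) ≤ ‖f'‖ ^ 2 := by
  have h := add_inner_add_sq_le_of_convexOn_sub_sq hsc hx y
  have hcs : -(‖f'‖ * ‖y - x‖) ≤ ⟪f', y - x⟫ := neg_le_of_abs_le (abs_real_inner_le_norm _ _)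
  nlinarith [sq_nonneg (‖f'‖ - γ * ‖y - x‖)]

end StronglyConvex

lemma gradient_eq_zero_of_forall_le {f : H → ℝ} {xbar : H} (hxbar : ∀ y, f xbar ≤ f y) :
    gradient f xbar = 0 := by
  have hmin : IsLocalMin f xbar := Filter.Eventually.of_forall hxbar
  simp [gradient, hmin.fderiv_eq_zero]

lemma ContDiff.differentiable_gradient {f : H → ℝ} (hf : ContDiff ℝ 2 f) :
    Differentiable ℝ (gradient f) :=
  (toDual ℝ H).symm.toContinuousLinearEquiv.differentiable.comp
    ((hf.fderiv_right (m := 1) (by norm_num)).differentiable one_ne_zero)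

def HasExpBound (lam : ℝ) (g : ℝ → ℝ) : Prop :=
  ∃ K, 0 ≤ K ∧ ∀ t ∈ Ici (0 : ℝ), g t ≤ K * exp (-lam * t)

namespace HasExpBound

variable {lam : ℝ} {g g₁ g₂ : ℝ → ℝ}

lemma mono (hg : HasExpBound lam g₂) (h : ∀ t ∈ Ici (0 : ℝ), g₁ t ≤ g₂ t) :
    HasExpBound lam g₁ := by
  obtain ⟨K, hK, hg⟩ := hg
  exact ⟨K, hK, fun t ht => (h t ht).trans (hg t ht)⟩

lemma add (h₁ : HasExpBound lam g₁) (h₂ : HasExpBound lam g₂) :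
    HasExpBound lam (fun t => g₁ t + g₂ t) := by
  obtain ⟨K₁, hK₁, h₁⟩ := h₁
  obtain ⟨K₂, hK₂, h₂⟩ := h₂
  refine ⟨K₁ + K₂, add_nonneg hK₁ hK₂, fun t ht => ?_⟩
  linarith [h₁ t ht, h₂ t ht]

lemma const_mul (hg : HasExpBound lam g) {c : ℝ} (hc : 0 ≤ c) :
    HasExpBound lam (fun t => c * g t) := by
  obtain ⟨K, hK, hg⟩ := hg
  refine ⟨c * K, mul_nonneg hc hK, fun t ht => ?_⟩
  rw [mul_assoc]
  exact mul_le_mul_of_nonneg_left (hg t ht) hc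

lemma of_rate_le (hg : HasExpBound lam g) {lam' : ℝ} (hlam : lam' ≤ lam) :
    HasExpBound lam' g := by
  obtain ⟨K, hK, hg⟩ := hg
  refine ⟨K, hK, fun t ht => (hg t ht).trans ?_⟩
  gcongr

lemma sqrt (hg : HasExpBound lam g) : HasExpBound (lam / 2) (fun t => √(g t)) := by
  obtain ⟨K, hK, hg⟩ := hg
  refine ⟨√K, Real.sqrt_nonneg K, fun t ht => ?_⟩
  have hexp : exp (-lam * t) = exp (-(lam / 2) * t) ^ 2 := by
    rw [← Real.exp_nat_mul]; ring_nf
  calc √(g t) ≤ √(K * exp (-lam * t)) := Real.sqrt_le_sqrt (hg t ht)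
    _ = √K * exp (-(lam / 2) * t) := by
      rw [hexp, Real.sqrt_mul hK, Real.sqrt_sq (exp_pos _).le]

lemma exists_le (hg : HasExpBound lam g) (hlam : 0 ≤ lam) :
    ∃ K, ∀ t ∈ Ici (0 : ℝ), g t ≤ K := by
  obtain ⟨K, hK, hg⟩ := hg
  refine ⟨K, fun t ht => (hg t ht).trans (mul_le_of_le_one_right hK ?_)⟩
  exact exp_le_one_iff.2 (by nlinarith [mem_Ici.1 ht])

lemma norm_map_of_lipschitzOnWith {E F : Type*} [SeminormedAddCommGroup E]
    [SeminormedAddCommGroup F] {G : E → F} {y : ℝ → E} {a : E}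
    (hG : ∀ s : Set E, IsBounded s → ∃ K : ℝ≥0, LipschitzOnWith K G s) (hGa : G a = 0)
    (hy : HasExpBound lam (fun t => ‖y t - a‖)) (hlam : 0 ≤ lam) :
    HasExpBound lam (fun t => ‖G (y t)‖) := by
  obtain ⟨R, hR⟩ := hy.exists_le hlam
  obtain ⟨K, hK⟩ := hG (closedBall a R) isBounded_closedBall
  refine (hy.const_mul K.2).mono fun t ht => ?_
  have := hK.dist_le_mul (y t) (mem_closedBall_iff_norm.2 (hR t ht)) a
    (mem_closedBall_self ((norm_nonneg _).trans (hR t ht)))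
  rwa [dist_eq_norm, dist_eq_norm, hGa, sub_zero] at this

end HasExpBound

lemma antitoneOn_Ici_of_hasDerivWithinAt_nonpos {E E' : ℝ → ℝ} {a : ℝ}
    (hE : ∀ t ∈ Ici a, HasDerivWithinAt E (E' t) (Ici a) t) (hE' : ∀ t ∈ Ici a, E' t ≤ 0) :
    AntitoneOn E (Ici a) := by
  refine antitoneOn_of_hasDerivWithinAt_nonpos (f' := E') (convex_Ici a)
    (fun t ht => (hE t ht).continuousWithinAt) (fun t ht => ?_) (fun t ht => ?_)
  · exact (hE t (interior_subset ht)).mono interior_subset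
  · exact hE' t (interior_subset ht)

lemma exists_le_of_hasDerivWithinAt_le_neg {E E' : ℝ → ℝ} {L δ : ℝ}
    (hE : ∀ t ∈ Ici (0 : ℝ), HasDerivWithinAt E (E' t) (Ici 0) t)
    (hE0 : ∀ t ∈ Ici (0 : ℝ), 0 ≤ E t) (hδ : 0 < δ)
    (hfar : ∀ t ∈ Ici (0 : ℝ), L < E t → E' t ≤ -δ) :
    ∃ T ∈ Ici (0 : ℝ), E T ≤ L := by
  by_contra! hcon
  have hanti : AntitoneOn (fun t => E t + δ * t) (Ici 0) :=
    antitoneOn_Ici_of_hasDerivWithinAt_nonpos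
      (fun t ht => (hE t ht).add ((hasDerivAt_id t).const_mul δ).hasDerivWithinAt)
      (fun t ht => by linarith [hfar t ht (hcon t ht)])
  set T := (E 0 + 1) / δ
  have hT : 0 ≤ T := div_nonneg (by linarith [hE0 0 self_mem_Ici]) hδ.le
  have := hanti self_mem_Ici hT hT
  simp only [mul_zero, add_zero] at this
  rw [mul_div_cancel₀ _ hδ.ne'] at this
  linarith [hE0 T hT]

lemma le_mul_exp_of_hasDerivWithinAt_le_neg_mul {E E' : ℝ → ℝ} {a c : ℝ}
    (hE : ∀ t ∈ Ici a, HasDerivWithinAt E (E' t) (Ici a) t)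
    (hdecay : ∀ t ∈ Ici a, E' t ≤ -c * E t) :
    ∀ t ∈ Ici a, E t ≤ E a * exp (-c * (t - a)) := by
  intro t ht
  have := le_gronwallBound_of_liminf_deriv_right_le (K := -c) (ε := 0) (b := t)
    (fun s hs => (hE s (Icc_subset_Ici_self hs)).continuousWithinAt.mono Icc_subset_Ici_self)
    (fun s hs r hr => by
      simpa [slope, smul_eq_mul] using
        ((hE s hs.1).mono (Ici_subset_Ici.2 hs.1)).liminf_right_slope_le hr)
    le_rfl (fun s hs => by simpa only [add_zero] using hdecay s hs.1) t ⟨ht, le_rfl⟩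
  rwa [gronwallBound_ε0] at this

lemma hasExpBound_of_hasDerivWithinAt {E E' : ℝ → ℝ} {L δ c : ℝ}
    (hE : ∀ t ∈ Ici (0 : ℝ), HasDerivWithinAt E (E' t) (Ici 0) t)
    (hE0 : ∀ t ∈ Ici (0 : ℝ), 0 ≤ E t) (hδ : 0 < δ) (hc : 0 ≤ c)
    (hfar : ∀ t ∈ Ici (0 : ℝ), L < E t → E' t ≤ -δ)
    (hnear : ∀ t ∈ Ici (0 : ℝ), E t ≤ L → E' t ≤ -c * E t) :
    HasExpBound c E := by
  have hanti : AntitoneOn E (Ici 0) := by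
    refine antitoneOn_Ici_of_hasDerivWithinAt_nonpos hE fun t ht => ?_
    rcases lt_or_ge L (E t) with h | h
    · linarith [hfar t ht h]
    · nlinarith [hnear t ht h, hE0 t ht]
  obtain ⟨T, hT, hET⟩ := exists_le_of_hasDerivWithinAt_le_neg hE hE0 hδ hfar
  have hdecay := le_mul_exp_of_hasDerivWithinAt_le_neg_mul (a := T)
    (fun t ht => (hE t (mem_Ici.2 (hT.trans ht))).mono (Ici_subset_Ici.2 hT))
    (fun t ht => have ht0 : t ∈ Ici (0 : ℝ) := mem_Ici.2 (hT.trans ht)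
      hnear t ht0 ((hanti hT ht0 ht).trans hET))
  refine ⟨E 0 * exp (c * T), mul_nonneg (hE0 0 self_mem_Ici) (exp_pos _).le, fun t ht => ?_⟩
  rw [mul_assoc, ← exp_add]
  rcases le_total T t with hTt | htT
  · calc E t ≤ E T * exp (-c * (t - T)) := hdecay t hTt
      _ ≤ E 0 * exp (c * T + -c * t) := by
        rw [show c * T + -c * t = -c * (t - T) by ring]
        gcongr
        exact hanti self_mem_Ici hT hT
  · calc E t ≤ E 0 := hanti self_mem_Ici ht ht
      _ ≤ E 0 * exp (c * T + -c * t) := by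
        refine le_mul_of_one_le_right (hE0 0 self_mem_Ici) (one_le_exp ?_)
        nlinarith

lemma hasDerivWithinAt_add_smul_gradient {f : H → ℝ} {G : H → H} {x x' x'' : ℝ → H}
    {β t : ℝ} {s : Set ℝ} (hf : DifferentiableAt ℝ (gradient f) (x t))
    (hx : HasDerivWithinAt x (x' t) s t) (hx' : HasDerivWithinAt x' (x'' t) s t)
    (heq : x'' t + G (x' t + β • gradient f (x t))
      + β • fderiv ℝ (gradient f) (x t) (x' t) + gradient f (x t) = 0) :
    HasDerivWithinAt (fun t => x' t + β • gradient f (x t))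
      (-(G (x' t + β • gradient f (x t)) + gradient f (x t))) s t := by
  refine (hx'.add ((hf.hasFDerivAt.comp_hasDerivWithinAt t hx).const_smul β)).congr_deriv ?_
  rw [eq_neg_iff_add_eq_zero, ← heq]
  abel

lemma hasDerivWithinAt_energy {f : H → ℝ} {G : H → H} {x v : ℝ → H} {β m t : ℝ} {s : Set ℝ}
    (hf : DifferentiableAt ℝ f (x t))
    (hx : HasDerivWithinAt x (v t - β • gradient f (x t)) s t)
    (hv : HasDerivWithinAt v (-(G (v t) + gradient f (x t))) s t) :
    HasDerivWithinAt (fun t => f (x t) - m + ‖v t‖ ^ 2 / 2)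
      (-(β * ‖gradient f (x t)‖ ^ 2) - ⟪G (v t), v t⟫) s t := by
  have hfx := hf.hasGradientAt.hasFDerivAt.comp_hasDerivWithinAt t hx
  refine ((hfx.sub_const m).add (hv.norm_sq.div_const 2)).congr_deriv ?_
  simp only [toDual_apply_apply, inner_sub_right, inner_neg_right, inner_add_right,
    real_inner_smul_right, real_inner_self_eq_norm_sq, real_inner_comm (v t)]
  ring

theorem hasExpBound_energy {γ α ε p r β : ℝ} {f φ : H → ℝ} {xbar : H} {x v : ℝ → H}
    (hγ : 0 < γ) (hsc : ConvexOn ℝ univ (fun y => f y - γ / 2 * ‖y‖ ^ 2))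
    (hfd : Differentiable ℝ f) (hxbar : ∀ y, f xbar ≤ f y)
    (hφc : ConvexOn ℝ univ φ) (hφd : Differentiable ℝ φ) (hφ0 : φ 0 = 0)
    (hα : 0 < α) (hε : 0 < ε) (hloc : ∀ u : H, ‖u‖ ≤ ε → α * ‖u‖ ^ 2 ≤ ⟪gradient φ u, u⟫)
    (hp : 0 ≤ p) (hr : 0 < r) (hgrow : ∀ u : H, r * ‖u‖ ^ p ≤ φ u) (hβ : 0 < β)
    (hx : ∀ t ∈ Ici (0 : ℝ), HasDerivWithinAt x (v t - β • gradient f (x t)) (Ici 0) t)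
    (hv : ∀ t ∈ Ici (0 : ℝ),
      HasDerivWithinAt v (-(gradient φ (v t) + gradient f (x t))) (Ici 0) t) :
    ∃ c > 0, HasExpBound c (fun t => f (x t) - f xbar + ‖v t‖ ^ 2 / 2) := by
  have hgap (z : H) : 0 ≤ f z - f xbar := sub_nonneg.2 (hxbar z)
  have hPL (z : H) : 2 * γ * (f z - f xbar) ≤ ‖gradient f z‖ ^ 2 :=
    polyak_lojasiewicz_of_convexOn_sub_sq hγ hsc (hfd z).hasGradientAt xbar
  have hφle (u : H) : r * ‖u‖ ^ p ≤ ⟪gradient φ u, u⟫ := by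
    linarith [hgrow u, hφc.sub_le_inner_of_hasGradientAt (hφd u).hasGradientAt]
  set L := ε ^ 2 / 2 with hL_def
  refine ⟨min (2 * γ * β) (2 * α), by positivity,
    hasExpBound_of_hasDerivWithinAt (L := L) (δ := min (γ * β * L) (r * √L ^ p))
      (fun t ht => hasDerivWithinAt_energy (hfd _) (hx t ht) (hv t ht))
      (fun t _ => by positivity [hgap (x t)]) (by positivity) (by positivity)
      (fun t _ hL => ?_) (fun t _ hL => ?_)⟩
  · have hv0 : 0 ≤ r * ‖v t‖ ^ p := by positivity
    rcases le_or_gt (L / 2) (f (x t) - f xbar) with hfar | hnear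
    · have : min (γ * β * L) (r * √L ^ p) ≤ γ * β * L := min_le_left _ _
      have := mul_le_mul_of_nonneg_left (hPL (x t)) hβ.le
      have := mul_le_mul_of_nonneg_left hfar (by positivity : 0 ≤ 2 * γ * β)
      linarith [hφle (v t)]
    · have hvL : √L ≤ ‖v t‖ := (Real.sqrt_le_left (norm_nonneg _)).2 (by linarith [hgap (x t)])
      have : min (γ * β * L) (r * √L ^ p) ≤ r * √L ^ p := min_le_right _ _
      have : r * √L ^ p ≤ r * ‖v t‖ ^ p := by gcongr
      nlinarith [hφle (v t), sq_nonneg ‖gradient f (x t)‖]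
  · have hvε : ‖v t‖ ≤ ε := by
      rw [← pow_le_pow_iff_left₀ (norm_nonneg _) hε.le two_ne_zero]
      linarith [hgap (x t), hL_def]
    have : min (2 * γ * β) (2 * α) ≤ 2 * γ * β := min_le_left _ _
    have : min (2 * γ * β) (2 * α) ≤ 2 * α := min_le_right _ _
    nlinarith [hPL (x t), hloc (v t) hvε, hgap (x t), sq_nonneg ‖v t‖]

lemma hasExpBound_norm_of_energy {γ c : ℝ} {f : H → ℝ} {xbar : H} {x v : ℝ → H} (hγ : 0 < γ)
    (hsc : ConvexOn ℝ univ (fun y => f y - γ / 2 * ‖y‖ ^ 2)) (hxbar : HasGradientAt f 0 xbar)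
    (hE : HasExpBound c (fun t => f (x t) - f xbar + ‖v t‖ ^ 2 / 2)) :
    HasExpBound (c / 2) (fun t => ‖x t - xbar‖) ∧ HasExpBound (c / 2) (fun t => ‖v t‖) := by
  have hgrowth (t : ℝ) := quadratic_growth_of_convexOn_sub_sq hsc hxbar (x t)
  constructor
  · refine (hE.const_mul (by positivity : 0 ≤ 2 / γ)).sqrt.mono fun t _ => ?_
    refine Real.le_sqrt_of_sq_le ?_
    rw [div_mul_eq_mul_div, le_div_iff₀ hγ]
    nlinarith [hgrowth t, sq_nonneg ‖v t‖]
  · refine (hE.const_mul zero_le_two).sqrt.mono fun t _ => Real.le_sqrt_of_sq_le ?_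
    nlinarith [hgrowth t, sq_nonneg ‖x t - xbar‖]

theorem adigeVGH_strongly_convex_exponential_rate_general
    (γ : ℝ) (hγ : 0 < γ)
    (f : H → ℝ) (hf : ContDiff ℝ 2 f)
    (hsc : ConvexOn ℝ Set.univ (fun y => f y - γ / 2 * ‖y‖ ^ 2))
    (hflip : ∀ s : Set H, IsBounded s → ∃ K : ℝ≥0, LipschitzOnWith K (gradient f) s)
    (xbar : H) (hxbar : ∀ y, f xbar ≤ f y)
    (φ : H → ℝ) (hφ : IsDampingPotential φ) (hφdiff : Differentiable ℝ φ)
    (α ε : ℝ) (hα : 0 < α) (hε : 0 < ε)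
    (hloc : ∀ u : H, ‖u‖ ≤ ε → α * ‖u‖ ^ 2 ≤ ⟪gradient φ u, u⟫)
    (p r : ℝ) (hp : 1 ≤ p) (hr : 0 < r) (hgrow : ∀ u : H, r * ‖u‖ ^ p ≤ φ u)
    (β : ℝ) (hβ : 0 < β)
    (x x' x'' : ℝ → H)
    (hx : ∀ t ∈ Set.Ici (0:ℝ), HasDerivWithinAt x (x' t) (Set.Ici 0) t)
    (hx' : ∀ t ∈ Set.Ici (0:ℝ), HasDerivWithinAt x' (x'' t) (Set.Ici 0) t)
    (heq : ∀ t ∈ Set.Ici (0:ℝ),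
        x'' t + gradient φ (x' t + β • gradient f (x t))
          + β • (fderiv ℝ (gradient f) (x t) (x' t)) + gradient f (x t) = 0) :
    ∃ K : ℝ, 0 ≤ K ∧ ∃ lam : ℝ, 0 < lam ∧ ∀ t ∈ Set.Ici (0:ℝ),
      f (x t) - f xbar ≤ K * Real.exp (-lam * t) ∧
      ‖x t - xbar‖ ≤ K * Real.exp (-lam * t) ∧
      ‖x' t + β • gradient f (x t)‖ ≤ K * Real.exp (-lam * t) ∧
      ‖x' t‖ ≤ K * Real.exp (-lam * t) ∧
      ‖gradient f (x t)‖ ≤ K * Real.exp (-lam * t) := by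
  have hfd : Differentiable ℝ f := hf.differentiable (by norm_num)
  have hgrad0 := gradient_eq_zero_of_forall_le hxbar
  set v := fun t => x' t + β • gradient f (x t)
  obtain ⟨c, hc, hE⟩ := hasExpBound_energy (v := v) hγ hsc hfd hxbar hφ.convexOn hφdiff
    hφ.map_zero hα hε hloc (by linarith) hr hgrow hβ (fun t ht => by simpa [v] using hx t ht)
    (fun t ht => hasDerivWithinAt_add_smul_gradient (hf.differentiable_gradient _)
      (hx t ht) (hx' t ht) (heq t ht))
  obtain ⟨hdist, hv⟩ := hasExpBound_norm_of_energy hγ hsc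
    (by simpa [hgrad0] using (hfd xbar).hasGradientAt) hE
  have hgrad := hdist.norm_map_of_lipschitzOnWith hflip hgrad0 (by positivity)
  have hvel : HasExpBound (c / 2) (fun t => ‖x' t‖) := by
    refine (hv.add (hgrad.const_mul hβ.le)).mono fun t _ => ?_
    calc ‖x' t‖ = ‖v t - β • gradient f (x t)‖ := by simp [v]
      _ ≤ ‖v t‖ + β * ‖gradient f (x t)‖ := by
        simpa [norm_smul, abs_of_pos hβ] using norm_sub_le (v t) (β • gradient f (x t))
  obtain ⟨K, hK, hsum⟩ :=
    ((((hE.of_rate_le (by linarith)).add hdist).add hv).add hvel).add hgrad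
  refine ⟨K, hK, c / 2, by positivity, fun t ht => ?_⟩
  have := hsum t ht
  have := sub_nonneg.2 (hxbar (x t))
  refine ⟨?_, ?_, ?_, ?_, ?_⟩ <;>
    linarith [norm_nonneg (x t - xbar), norm_nonneg (v t), norm_nonneg (x' t),
      norm_nonneg (gradient f (x t)), sq_nonneg ‖v t‖]

/-- **(ADIGE-VGH) strongly convex case: exponential convergence rates
(Theorem 10.7).**  Let `f` be `γ`-strongly convex (i.e. `f - (γ/2)‖·‖²` convex),
`C²`, with `∇f` Lipschitz on bounded sets and unique minimizer `x̄`; let `φ` be a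
differentiable damping potential with `∇φ` Lipschitz on bounded sets satisfying the
local growth `⟪∇φ(u), u⟫ ≥ α‖u‖²` for `‖u‖ ≤ ε` and the global growth
`φ(u) ≥ r‖u‖^p`, and let `β > 0`.  Then every `C²` solution of
`ẍ + ∇φ(ẋ + β∇f(x)) + β∇²f(x)ẋ + ∇f(x) = 0` satisfies exponential convergence rates
for the values, the distance to `x̄`, `‖ẋ + β∇f(x)‖`, and consequently for `‖ẋ‖` and
`‖∇f(x)‖`. -/
theorem adigeVGH_strongly_convex_exponential_rate
    (γ : ℝ) (hγ : 0 < γ)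
    (f : H → ℝ) (hf : ContDiff ℝ 2 f)
    (hsc : ConvexOn ℝ Set.univ (fun y => f y - γ / 2 * ‖y‖ ^ 2))
    (hflip : ∀ s : Set H, IsBounded s → ∃ K : ℝ≥0, LipschitzOnWith K (gradient f) s)
    (xbar : H) (hxbar : ∀ y, f xbar ≤ f y)
    (φ : H → ℝ) (hφ : IsDampingPotential φ) (hφdiff : Differentiable ℝ φ)
    (hφlip : ∀ s : Set H, IsBounded s → ∃ K : ℝ≥0, LipschitzOnWith K (gradient φ) s)
    (α ε : ℝ) (hα : 0 < α) (hε : 0 < ε)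
    (hloc : ∀ u : H, ‖u‖ ≤ ε → α * ‖u‖ ^ 2 ≤ ⟪gradient φ u, u⟫)
    (p r : ℝ) (hp : 1 ≤ p) (hr : 0 < r) (hgrow : ∀ u : H, r * ‖u‖ ^ p ≤ φ u)
    (β : ℝ) (hβ : 0 < β)
    (x x' x'' : ℝ → H)
    (hx : ∀ t ∈ Set.Ici (0:ℝ), HasDerivWithinAt x (x' t) (Set.Ici 0) t)
    (hx' : ∀ t ∈ Set.Ici (0:ℝ), HasDerivWithinAt x' (x'' t) (Set.Ici 0) t)
    (hx''c : ContinuousOn x'' (Set.Ici 0))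
    (heq : ∀ t ∈ Set.Ici (0:ℝ),
        x'' t + gradient φ (x' t + β • gradient f (x t))
          + β • (fderiv ℝ (gradient f) (x t) (x' t)) + gradient f (x t) = 0) :
    ∃ K : ℝ, 0 ≤ K ∧ ∃ lam : ℝ, 0 < lam ∧ ∀ t ∈ Set.Ici (0:ℝ),
      f (x t) - f xbar ≤ K * Real.exp (-lam * t) ∧
      ‖x t - xbar‖ ≤ K * Real.exp (-lam * t) ∧
      ‖x' t + β • gradient f (x t)‖ ≤ K * Real.exp (-lam * t) ∧
      ‖x' t‖ ≤ K * Real.exp (-lam * t) ∧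
      ‖gradient f (x t)‖ ≤ K * Real.exp (-lam * t) :=
  adigeVGH_strongly_convex_exponential_rate_general γ hγ f hf hsc hflip xbar hxbar φ hφ hφdiff α ε
    hα hε hloc p r hp hr hgrow β hβ x x' x'' hx hx' heq
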